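/- Let (V, ⟨·,·⟩) be a non-degenerate quadratic space over a field k with char(k) ≠ 2 and let σ ∈ O(V) have minimal polynomial p̃·p̃*, where p̃ is a monic irreducible separable polynomial over k with p̃ ≠ p̃*. Let E := k[x]/(p̃·p̃*), regard V as an E-module via σ, let ι be the involution of E over k with ι(x) = x^{-1}, and let Tr_{E/k} be the trace of the finite étale k-algebra E. Then V admits one and only one hermitian inner product h over E with respect to ι satisfying ⟨u, v⟩ = Tr_{E/k}(h(u, v)) for all u, v ∈ V; moreover this h is non-degenerate. -/

import Mathlib

/-!
Since `p̃` and `p̃*` are distinct monic irreducible separable polynomials (`p̃*` is the minimal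
polynomial of `α⁻¹` for a root `α` of `p̃`), the Chinese remainder theorem makes
`E ≅ k[x]/(p̃) × k[x]/(p̃*)` a product of separable field extensions, so the trace form of `E/k`
is nondegenerate. Hence for fixed `u, v` the functional `e ↦ ⟨e • u, v⟩` is `e ↦ Tr (e h(u, v))`
for exactly one `h(u, v) ∈ E`; this forces uniqueness and gives `E`-linearity in `u`. Hermitian
symmetry says that `ι(e)` acts as the `⟨·,·⟩`-adjoint of `e`; this holds for `e = x` because `σ`
is an isometry and `ι(x) = x⁻¹`, hence on all of `E`. Nondegeneracy of `h` follows from that of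
`⟨·,·⟩` via `⟨u, v⟩ = Tr h(u, v)`.
-/

open Polynomial

/-- `p*(x) = p(0)⁻¹ x^(deg p) p(1/x)`. -/
noncomputable def pstar {k : Type*} [Field k] (p : k[X]) : k[X] :=
  C (p.eval 0)⁻¹ * p.reverse

lemma AdjoinRoot.isSeparable_of_separable {k : Type*} [Field k] {p : k[X]} [Fact (Irreducible p)]
    (hm : p.Monic) (hs : p.Separable) : Algebra.IsSeparable k (AdjoinRoot p) := by
  have := (AdjoinRoot.powerBasis hm.ne_zero).finite
  have hroot : IsSeparable k (AdjoinRoot.root p) := by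
    rwa [IsSeparable, AdjoinRoot.minpoly_root hm.ne_zero, hm.leadingCoeff, inv_one, C_1, mul_one]
  have htop : IntermediateField.adjoin k {AdjoinRoot.root p} = ⊤ := by
    rw [IntermediateField.adjoin_eq_top_iff, AdjoinRoot.adjoinRoot_eq_top]
  have := (IntermediateField.isSeparable_adjoin_simple_iff_isSeparable k _).mpr hroot
  rw [htop] at this
  exact (IntermediateField.isSeparable_top k _).mp this

section Pstar

variable {k : Type*} [Field k] {p : k[X]}

lemma natTrailingDegree_eq_zero_of_eval_zero_ne_zero (h0 : p.eval 0 ≠ 0) :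
    p.natTrailingDegree = 0 :=
  natTrailingDegree_eq_zero.mpr (Or.inr (by rwa [coeff_zero_eq_eval_zero]))

lemma monic_pstar (h0 : p.eval 0 ≠ 0) : (pstar p).Monic := by
  rw [Monic, pstar, leadingCoeff_mul, leadingCoeff_C, reverse_leadingCoeff, trailingCoeff,
    natTrailingDegree_eq_zero_of_eval_zero_ne_zero h0, coeff_zero_eq_eval_zero,
    inv_mul_cancel₀ h0]

lemma natDegree_pstar (h0 : p.eval 0 ≠ 0) : (pstar p).natDegree = p.natDegree := by
  rw [pstar, natDegree_C_mul (inv_ne_zero h0), reverse_natDegree,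
    natTrailingDegree_eq_zero_of_eval_zero_ne_zero h0, Nat.sub_zero]

lemma aeval_inv_pstar_eq_zero_iff {L : Type*} [Field L] [Algebra k L] (h0 : p.eval 0 ≠ 0)
    {x : L} (hx : x ≠ 0) : aeval x⁻¹ (pstar p) = 0 ↔ aeval x p = 0 := by
  have := invertibleOfNonzero hx
  rw [pstar, map_mul, aeval_C, mul_eq_zero, or_iff_right (by simp [h0]), ← invOf_eq_inv,
    aeval_def, aeval_def, eval₂_reverse_eq_zero_iff]

lemma root_ne_zero_of_eval_zero_ne_zero [Fact (Irreducible p)] (h0 : p.eval 0 ≠ 0) :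
    AdjoinRoot.root p ≠ 0 := by
  rw [← AdjoinRoot.mk_X, Ne, AdjoinRoot.mk_eq_zero]
  intro hdvd
  have hXp : X ∣ p := ((Fact.out : Irreducible p).associated_of_dvd irreducible_X hdvd).symm.dvd
  exact h0 (by rwa [X_dvd_iff, coeff_zero_eq_eval_zero] at hXp)

lemma pstar_eq_minpoly_inv_root [Fact (Irreducible p)] (hm : p.Monic) (h0 : p.eval 0 ≠ 0) :
    pstar p = minpoly k (AdjoinRoot.root p)⁻¹ := by
  set α := AdjoinRoot.root p
  have hα : α ≠ 0 := root_ne_zero_of_eval_zero_ne_zero h0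
  have := (AdjoinRoot.powerBasis hm.ne_zero).finite
  have hint : IsIntegral k α⁻¹ := .of_finite k _
  have hroot : aeval α⁻¹ (pstar p) = 0 :=
    (aeval_inv_pstar_eq_zero_iff h0 hα).mpr (AdjoinRoot.aeval_eq p ▸ AdjoinRoot.mk_self)
  -- the degree bound comes from running the same argument backwards: `p ∣ q*` for `q` the
  -- minimal polynomial of `α⁻¹`
  refine eq_of_monic_of_dvd_of_natDegree_le (minpoly.monic hint) (monic_pstar h0)
    (minpoly.dvd k _ hroot) ?_
  set q := minpoly k α⁻¹
  have hq0 : q.eval 0 ≠ 0 := by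
    rw [← coeff_zero_eq_eval_zero]; exact minpoly.coeff_zero_ne_zero hint (inv_ne_zero hα)
  have hdvd : p ∣ pstar q := by
    rw [← AdjoinRoot.mk_eq_zero, ← AdjoinRoot.aeval_eq, ← inv_inv (AdjoinRoot.root p),
      aeval_inv_pstar_eq_zero_iff hq0 (inv_ne_zero hα)]
    exact minpoly.aeval k _
  rw [natDegree_pstar h0, ← natDegree_pstar hq0]
  exact natDegree_le_of_dvd hdvd (monic_pstar hq0).ne_zero

lemma irreducible_pstar (hm : p.Monic) (hirr : Irreducible p) (h0 : p.eval 0 ≠ 0) :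
    Irreducible (pstar p) := by
  have := Fact.mk hirr
  have := (AdjoinRoot.powerBasis hm.ne_zero).finite
  rw [pstar_eq_minpoly_inv_root hm h0]
  exact minpoly.irreducible (.of_finite k _)

lemma separable_pstar (hm : p.Monic) (hirr : Irreducible p) (hs : p.Separable)
    (h0 : p.eval 0 ≠ 0) : (pstar p).Separable := by
  have := Fact.mk hirr
  have := AdjoinRoot.isSeparable_of_separable hm hs
  rw [pstar_eq_minpoly_inv_root hm h0]
  exact Algebra.IsSeparable.isSeparable k _

lemma isCoprime_pstar (hm : p.Monic) (hirr : Irreducible p) (h0 : p.eval 0 ≠ 0)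
    (hps : pstar p ≠ p) : IsCoprime p (pstar p) := by
  rw [hirr.coprime_iff_not_dvd]
  intro hdvd
  exact hps (eq_of_monic_of_associated (monic_pstar h0) hm
    (hirr.associated_of_dvd (irreducible_pstar hm hirr h0) hdvd).symm)

end Pstar

section TraceForm

variable {k : Type*} [Field k]

lemma traceForm_nondegenerate_of_algEquiv {A B : Type*} [CommRing A] [CommRing B] [Algebra k A]
    [Algebra k B] (e : A ≃ₐ[k] B) (hA : (Algebra.traceForm k A).Nondegenerate) :
    (Algebra.traceForm k B).Nondegenerate := by
  have hcongr : LinearMap.BilinForm.congr e.toLinearEquiv (Algebra.traceForm k A) =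
      Algebra.traceForm k B := by
    ext x y
    simp [← map_mul, ← Algebra.trace_eq_of_algEquiv e]
  exact hcongr ▸ hA.congr e.toLinearEquiv

lemma traceForm_prod_nondegenerate {A B : Type*} [CommRing A] [CommRing B] [Algebra k A]
    [Algebra k B] [FiniteDimensional k A] [FiniteDimensional k B]
    (hA : (Algebra.traceForm k A).Nondegenerate) (hB : (Algebra.traceForm k B).Nondegenerate) :
    (Algebra.traceForm k (A × B)).Nondegenerate := by
  refine (Algebra.traceForm_isSymm (S := A × B) k).isRefl.nondegenerate_iff_separatingLeft.mpr
    fun x hx => Prod.ext (hA.1 _ fun a => ?_) (hB.1 _ fun b => ?_)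
  · simpa [Algebra.trace_prod_apply] using hx (a, 0)
  · simpa [Algebra.trace_prod_apply] using hx (0, b)

end TraceForm

noncomputable def AdjoinRoot.algEquivProdOfIsCoprime {R : Type*} [CommRing R] {p q : R[X]}
    (hco : IsCoprime p q) : AdjoinRoot (p * q) ≃ₐ[R] AdjoinRoot p × AdjoinRoot q :=
  (Ideal.quotientEquivAlgOfEq R (Ideal.span_singleton_mul_span_singleton p q).symm).trans
    (AlgEquiv.ofRingEquiv (f := Ideal.quotientMulEquivQuotientProd _ _
      ((Ideal.isCoprime_span_singleton_iff p q).mpr hco)) fun _ => rfl)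

lemma AdjoinRoot.traceForm_mul_nondegenerate {k : Type*} [Field k] {p q : k[X]}
    (hpm : p.Monic) (hqm : q.Monic) (hpi : Irreducible p) (hqi : Irreducible q)
    (hps : p.Separable) (hqs : q.Separable) (hco : IsCoprime p q) :
    (Algebra.traceForm k (AdjoinRoot (p * q))).Nondegenerate := by
  have := Fact.mk hpi
  have := Fact.mk hqi
  have := (AdjoinRoot.powerBasis hpm.ne_zero).finite
  have := (AdjoinRoot.powerBasis hqm.ne_zero).finite
  have := AdjoinRoot.isSeparable_of_separable hpm hps
  have := AdjoinRoot.isSeparable_of_separable hqm hqs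
  exact traceForm_nondegenerate_of_algEquiv (AdjoinRoot.algEquivProdOfIsCoprime hco).symm
    (traceForm_prod_nondegenerate (traceForm_nondegenerate k _) (traceForm_nondegenerate k _))

section TraceLift

open LinearMap (BilinForm IsAdjointPair)

variable {k E V : Type*} [Field k] [CommRing E] [Algebra k E] [AddCommGroup V] [Module k V]
  {φ : E →ₐ[k] Module.End k V} {B : BilinForm k V}

lemma isAdjointPair_of_isometry_of_adjoin_eq_top {x : E} (hx : Algebra.adjoin k {x} = ⊤)
    (ι : E ≃ₐ[k] E) (hιx : ι x * x = 1) (hB : ∀ u v, B (φ x u) (φ x v) = B u v) (a : E) :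
    IsAdjointPair B B (φ (ι a)) (φ a) := by
  have ha : a ∈ Algebra.adjoin k {x} := hx ▸ Algebra.mem_top
  induction ha using Algebra.adjoin_induction with
  | mem y hy =>
    rw [Set.mem_singleton_iff.mp hy]
    intro u v
    have hinv : φ x (φ (ι x) u) = u := by
      rw [← Module.End.mul_apply, ← map_mul, mul_comm, hιx, map_one, Module.End.one_apply]
    rw [← hB, hinv]
  | algebraMap r =>
    rw [AlgEquiv.commutes, AlgHom.commutes, Algebra.algebraMap_eq_smul_one]
    exact (LinearMap.isAdjointPair_one (B := B)).smul r
  | add a b _ _ ha hb =>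
    rw [map_add ι, map_add φ, map_add φ]
    exact ha.add hb
  | mul a b _ _ ha hb =>
    rw [map_mul ι, map_mul φ, mul_comm a b, map_mul φ]
    exact ha.mul hb

variable (hT : (Algebra.traceForm k E).Nondegenerate)

include hT in
lemma eq_of_forall_trace_mul_eq {a b : E}
    (h : ∀ e, Algebra.trace k E (e * a) = Algebra.trace k E (e * b)) : a = b := by
  rw [← sub_eq_zero]
  refine hT.2 _ fun e => ?_
  rw [Algebra.traceForm_apply, mul_sub, map_sub, h, sub_self]

variable [FiniteDimensional k E]

variable (φ B) in
noncomputable def traceLift (u v : V) : E :=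
  (BilinForm.toDual _ hT).symm (B.flip v ∘ₗ LinearMap.applyₗ u ∘ₗ φ.toLinearMap)

lemma trace_mul_traceLift (e : E) (u v : V) :
    Algebra.trace k E (e * traceLift φ B hT u v) = B (φ e u) v := by
  rw [mul_comm, ← Algebra.traceForm_apply, ← BilinForm.toDual_def hT, traceLift,
    LinearEquiv.apply_symm_apply]
  rfl

lemma eq_traceLift_of_forall {a : E} {u v : V}
    (h : ∀ e, Algebra.trace k E (e * a) = B (φ e u) v) : a = traceLift φ B hT u v :=
  eq_of_forall_trace_mul_eq hT fun e => by rw [h, trace_mul_traceLift]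

lemma trace_traceLift (u v : V) : Algebra.trace k E (traceLift φ B hT u v) = B u v := by
  simpa using trace_mul_traceLift hT 1 u v

lemma traceLift_add_left (u₁ u₂ v : V) :
    traceLift φ B hT (u₁ + u₂) v = traceLift φ B hT u₁ v + traceLift φ B hT u₂ v :=
  (eq_traceLift_of_forall hT fun e => by
    simp only [mul_add, map_add, trace_mul_traceLift, LinearMap.add_apply]).symm

lemma traceLift_apply_left (a : E) (u v : V) :
    traceLift φ B hT (φ a u) v = a * traceLift φ B hT u v :=
  (eq_traceLift_of_forall hT fun e => by
    rw [← mul_assoc, trace_mul_traceLift, map_mul, Module.End.mul_apply]).symm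

lemma traceLift_swap (hsymm : ∀ u v, B u v = B v u) (ι : E ≃ₐ[k] E)
    (hadj : ∀ a, IsAdjointPair B B (φ (ι a)) (φ a)) (u v : V) :
    traceLift φ B hT v u = ι (traceLift φ B hT u v) := by
  refine (eq_traceLift_of_forall hT fun e => ?_).symm
  rw [← Algebra.trace_eq_of_algEquiv ι.symm, map_mul, AlgEquiv.symm_apply_apply,
    trace_mul_traceLift, hsymm, ← hadj, AlgEquiv.apply_symm_apply]

lemma eq_traceLift {h : V → V → E} (hmul : ∀ a u v, h (φ a u) v = a * h u v)
    (htr : ∀ u v, B u v = Algebra.trace k E (h u v)) : h = traceLift φ B hT := by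
  ext u v
  exact eq_traceLift_of_forall hT fun e => by rw [← hmul, htr]

end TraceLift

theorem stmt_5_general {k V : Type*} [Field k] [AddCommGroup V] [Module k V] [FiniteDimensional k V]
    (B : LinearMap.BilinForm k V) (hsymm : ∀ u v, B u v = B v u)
    (hBnd : ∀ u, (∀ v, B u v = 0) → u = 0)
    (σ : V ≃ₗ[k] V) (hσ : ∀ u v, B (σ u) (σ v) = B u v)
    (pt : k[X]) (hmonic : pt.Monic) (hirr : Irreducible pt) (hsep : pt.Separable)
    (hps : pstar pt ≠ pt)
    (hmin : minpoly k (σ.toLinearMap : Module.End k V) = pt * pstar pt)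
    (ι : AdjoinRoot (pt * pstar pt) ≃ₐ[k] AdjoinRoot (pt * pstar pt))
    (hιx : ι (AdjoinRoot.root (pt * pstar pt)) * AdjoinRoot.root (pt * pstar pt) = 1) :
    (∃! h : V → V → AdjoinRoot (pt * pstar pt),
        (∀ u₁ u₂ v, h (u₁ + u₂) v = h u₁ v + h u₂ v) ∧
        (∀ (g : k[X]) (u v : V),
          h (aeval σ.toLinearMap g u) v = AdjoinRoot.mk (pt * pstar pt) g * h u v) ∧
        (∀ u v, h v u = ι (h u v)) ∧
        (∀ u v, B u v = Algebra.trace k (AdjoinRoot (pt * pstar pt)) (h u v))) ∧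
    (∀ h : V → V → AdjoinRoot (pt * pstar pt),
        ((∀ u₁ u₂ v, h (u₁ + u₂) v = h u₁ v + h u₂ v) ∧
        (∀ (g : k[X]) (u v : V),
          h (aeval σ.toLinearMap g u) v = AdjoinRoot.mk (pt * pstar pt) g * h u v) ∧
        (∀ u v, h v u = ι (h u v)) ∧
        (∀ u v, B u v = Algebra.trace k (AdjoinRoot (pt * pstar pt)) (h u v))) →
        ∀ u, (∀ v, h u v = 0) → u = 0) := by
  have h0 : pt.eval 0 ≠ 0 := fun h => minpoly.ne_zero (IsIntegral.of_finite k _) <| by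
    rw [hmin, pstar, h, inv_zero, map_zero, zero_mul, mul_zero]
  have hT := AdjoinRoot.traceForm_mul_nondegenerate hmonic (monic_pstar h0) hirr
    (irreducible_pstar hmonic hirr h0) hsep (separable_pstar hmonic hirr hsep h0)
    (isCoprime_pstar hmonic hirr h0 hps)
  have := (AdjoinRoot.powerBasis (hmonic.mul (monic_pstar h0)).ne_zero).finite
  -- `V` as a module over `E = k[x]/(p̃ p̃*)`, with `x` acting as `σ`
  let φ : AdjoinRoot (pt * pstar pt) →ₐ[k] Module.End k V :=
    Ideal.Quotient.liftₐ _ (aeval σ.toLinearMap) fun g hg => by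
      obtain ⟨c, rfl⟩ := Ideal.mem_span_singleton'.mp hg
      rw [map_mul, ← hmin, minpoly.aeval, mul_zero]
  have hφ (g : k[X]) : φ (AdjoinRoot.mk _ g) = aeval σ.toLinearMap g := rfl
  have hadj := isAdjointPair_of_isometry_of_adjoin_eq_top (φ := φ) (B := B)
    AdjoinRoot.adjoinRoot_eq_top ι hιx fun u v => by
      rw [← AdjoinRoot.mk_X, hφ, aeval_X]
      exact hσ u v
  refine ⟨⟨traceLift φ B hT, ⟨traceLift_add_left hT, fun g u v => ?_,
    traceLift_swap hT hsymm ι hadj, fun u v => (trace_traceLift hT u v).symm⟩, ?_⟩, ?_⟩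
  · rw [← hφ]
    exact traceLift_apply_left hT _ u v
  · rintro h ⟨-, hmul, -, htr⟩
    refine eq_traceLift hT (fun a => ?_) htr
    obtain ⟨g, rfl⟩ := AdjoinRoot.mk_surjective a
    simpa only [hφ] using hmul g
  · rintro h ⟨-, -, -, htr⟩ u hu
    exact hBnd u fun v => by rw [htr, hu, map_zero]

/-- if the minimal polynomial of the isometry `σ` is `p̃ p̃*` with `p̃` monic
irreducible separable and `p̃ ≠ p̃*`, then, regarding `V` as a module over
`E = k[x]/(p̃ p̃*)` via `σ`, there is one and only one hermitian inner product `h` on `V`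
over `E` (w.r.t. the involution `ι` with `ι(x) = x⁻¹`) with
`⟨u,v⟩ = Tr_{E/k} (h u v)` for all `u v`; moreover this `h` is non-degenerate. -/
theorem stmt_5 {k V : Type*} [Field k] [AddCommGroup V] [Module k V] [FiniteDimensional k V]
    (hchar : (2 : k) ≠ 0)
    (B : LinearMap.BilinForm k V) (hsymm : ∀ u v, B u v = B v u)
    (hBnd : ∀ u, (∀ v, B u v = 0) → u = 0)
    (σ : V ≃ₗ[k] V) (hσ : ∀ u v, B (σ u) (σ v) = B u v)
    (pt : k[X]) (hmonic : pt.Monic) (hirr : Irreducible pt) (hsep : pt.Separable)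
    (hps : pstar pt ≠ pt)
    (hmin : minpoly k (σ.toLinearMap : Module.End k V) = pt * pstar pt)
    (ι : AdjoinRoot (pt * pstar pt) ≃ₐ[k] AdjoinRoot (pt * pstar pt))
    (hι : ∀ a, ι (ι a) = a)
    (hιx : ι (AdjoinRoot.root (pt * pstar pt)) * AdjoinRoot.root (pt * pstar pt) = 1) :
    (∃! h : V → V → AdjoinRoot (pt * pstar pt),
        (∀ u₁ u₂ v, h (u₁ + u₂) v = h u₁ v + h u₂ v) ∧
        (∀ (g : k[X]) (u v : V),
          h (aeval σ.toLinearMap g u) v = AdjoinRoot.mk (pt * pstar pt) g * h u v) ∧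
        (∀ u v, h v u = ι (h u v)) ∧
        (∀ u v, B u v = Algebra.trace k (AdjoinRoot (pt * pstar pt)) (h u v))) ∧
    (∀ h : V → V → AdjoinRoot (pt * pstar pt),
        ((∀ u₁ u₂ v, h (u₁ + u₂) v = h u₁ v + h u₂ v) ∧
        (∀ (g : k[X]) (u v : V),
          h (aeval σ.toLinearMap g u) v = AdjoinRoot.mk (pt * pstar pt) g * h u v) ∧
        (∀ u v, h v u = ι (h u v)) ∧
        (∀ u v, B u v = Algebra.trace k (AdjoinRoot (pt * pstar pt)) (h u v))) →
        ∀ u, (∀ v, h u v = 0) → u = 0) :=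
  stmt_5_general B hsymm hBnd σ hσ pt hmonic hirr hsep hps hmin ι hιx
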